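/- arXiv:1608.08246 — 5 statements merged into one kernel-verified Lean document; each statement's English description precedes it below -/
import Mathlib

section
/- Let (c_k)_{k≥1} be a sequence of nonnegative real numbers with ∑_{k=1}^∞ c_k < 1, and for k ≥ 1 set R_k = ∑_{n=k+1}^∞ c_n. Assume R_k > 0 for every k ≥ 1 (so that 0 < R_k < 1 and log(1/R_k) > 0). Then the series ∑_{k=1}^∞ c_k / (R_k · log(1/R_k)) diverges, i.e. its partial sums tend to +∞. -/
open Filter

-- Lemma A: x ↦ -(x log x) is monotone on (0, e⁻¹]
lemma lemA {x y : ℝ} (hx : 0 < x) (hxy : x ≤ y) (hy : y ≤ Real.exp (-1)) :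
    -(x * Real.log x) ≤ -(y * Real.log y) := by
  rcases eq_or_lt_of_le hxy with rfl | h
  · exact le_refl _
  have hmono : MonotoneOn (fun t : ℝ => -(t * Real.log t)) (Set.Icc x y) := by
    apply monotoneOn_of_deriv_nonneg (convex_Icc x y)
    · exact ((continuousOn_id.mul (Real.continuousOn_log.mono (by
        intro t ht
        exact fun h0 => absurd (h0 ▸ ht.1 : x ≤ (0:ℝ)) (not_le.2 hx)))).neg)
    · intro t ht
      rw [interior_Icc] at ht
      have ht0 : 0 < t := lt_trans hx ht.1
      exact (((hasDerivAt_id t).mul (Real.hasDerivAt_log ht0.ne')).neg).differentiableAt.differentiableWithinAt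
    · intro t ht
      rw [interior_Icc] at ht
      have ht0 : 0 < t := lt_trans hx ht.1
      have hd : HasDerivAt (fun t : ℝ => -(t * Real.log t)) (-(1 * Real.log t + t * t⁻¹)) t :=
        ((hasDerivAt_id t).mul (Real.hasDerivAt_log ht0.ne')).neg
      rw [hd.deriv]
      have : Real.log t ≤ -1 := by
        have := Real.log_le_log ht0 (le_of_lt (lt_of_lt_of_le ht.2 hy))
        rwa [Real.log_exp] at this
      have ht0' : t * t⁻¹ = 1 := mul_inv_cancel₀ ht0.ne'
      nlinarith
  exact hmono (Set.left_mem_Icc.2 hxy) (Set.right_mem_Icc.2 hxy) hxy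

-- Lemma B: key inequality
lemma lemB {a b : ℝ} (ha : 0 < a) (hab : a ≤ b) (hb : b ≤ Real.exp (-1)) :
    Real.log (-Real.log a) - Real.log (-Real.log b) ≤ (b - a) / (a * -Real.log a) := by
  have he1 : Real.exp (-1) < 1 := by
    rw [Real.exp_lt_one_iff]; norm_num
  have hloga : Real.log a < 0 := Real.log_neg ha (lt_of_le_of_lt (hab.trans hb) he1)
  have hA : 0 < a * -Real.log a := mul_pos ha (by linarith)
  -- F t = t/(a * -log a) + log (-log t) is monotone on [a, b]
  have hmono : MonotoneOn (fun t : ℝ => t / (a * -Real.log a) + Real.log (-Real.log t))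
      (Set.Icc a b) := by
    apply monotoneOn_of_deriv_nonneg (convex_Icc a b)
    · apply ContinuousOn.add
      · exact (continuousOn_id.div_const _)
      · apply ContinuousOn.log
        · apply ContinuousOn.neg
          apply Real.continuousOn_log.mono
          intro t ht h0
          exact absurd (h0 ▸ ht.1 : a ≤ (0:ℝ)) (not_le.2 ha)
        · intro t ht
          have : Real.log t < 0 := Real.log_neg (lt_of_lt_of_le ha ht.1)
            (lt_of_le_of_lt (ht.2.trans hb) he1)
          linarith [this]
    · intro t ht
      rw [interior_Icc] at ht
      have ht0 : 0 < t := lt_trans ha ht.1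
      have hlogt : Real.log t < 0 := Real.log_neg ht0 (lt_of_le_of_lt ((le_of_lt ht.2).trans hb) he1)
      have hd : HasDerivAt (fun t : ℝ => t / (a * -Real.log a) + Real.log (-Real.log t))
          (1 / (a * -Real.log a) + (-Real.log t)⁻¹ * -(t⁻¹)) t := by
        apply HasDerivAt.add
        · simpa using (hasDerivAt_id t).div_const (a * -Real.log a)
        · exact (Real.hasDerivAt_log (by linarith : -Real.log t ≠ 0)).comp t
            ((Real.hasDerivAt_log ht0.ne').neg)
      exact hd.differentiableAt.differentiableWithinAt
    · intro t ht
      rw [interior_Icc] at ht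
      have ht0 : 0 < t := lt_trans ha ht.1
      have hlogt : Real.log t < 0 := Real.log_neg ht0 (lt_of_le_of_lt ((le_of_lt ht.2).trans hb) he1)
      have hd : HasDerivAt (fun t : ℝ => t / (a * -Real.log a) + Real.log (-Real.log t))
          (1 / (a * -Real.log a) + (-Real.log t)⁻¹ * -(t⁻¹)) t := by
        apply HasDerivAt.add
        · simpa using (hasDerivAt_id t).div_const (a * -Real.log a)
        · exact (Real.hasDerivAt_log (by linarith : -Real.log t ≠ 0)).comp t
            ((Real.hasDerivAt_log ht0.ne').neg)
      rw [hd.deriv]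
      have hT : 0 < t * -Real.log t := mul_pos ht0 (by linarith)
      have hAT : a * -Real.log a ≤ t * -Real.log t := by
        have := lemA ha ht.1.le (le_of_lt (lt_of_lt_of_le ht.2 hb))
        nlinarith
      have h1 : (-Real.log t)⁻¹ * -(t⁻¹) = -(t * -Real.log t)⁻¹ := by
        rw [mul_inv]; field_simp
      rw [h1]
      have : (t * -Real.log t)⁻¹ ≤ (a * -Real.log a)⁻¹ :=
        inv_anti₀ hA hAT
      rw [one_div]
      linarith
  have := hmono (Set.left_mem_Icc.2 hab) (Set.right_mem_Icc.2 hab) hab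
  simp only at this
  have h3 : (b - a) / (a * -Real.log a) = b / (a * -Real.log a) - a / (a * -Real.log a) := by
    rw [sub_div]
  linarith

/-- Lemma 3 of the paper. If `(c k)` is a nonnegative summable sequence
with total sum `< 1` (so the binary logarithms below are positive), and all the tail sums
`R k = ∑_{n > k} c n` are positive, then the series
`∑ k, c k / (R k * log₂ (1 / R k))` diverges to `+∞`. -/
theorem stmt0 (c : ℕ → ℝ) (hc : ∀ k, 0 ≤ c k) (hsum : Summable c)
    (hlt : ∑' k, c k < 1)
    (R : ℕ → ℝ) (hR : ∀ k, R k = ∑' n, c (k + 1 + n))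
    (hRpos : ∀ k, 0 < R k) :
    Tendsto (fun N => ∑ k ∈ Finset.range N, c k / (R k * Real.logb 2 (1 / R k)))
      atTop atTop := by
  -- basic facts about R
  have hR' : ∀ k, R k = ∑' n, c (n + (k + 1)) := by
    intro k; rw [hR k]; exact tsum_congr fun n => by rw [add_comm]
  have hRlt1 : ∀ k, R k < 1 := by
    intro k
    have h := Summable.sum_add_tsum_nat_add (f := c) (k + 1) hsum
    have hpart : 0 ≤ ∑ i ∈ Finset.range (k + 1), c i :=
      Finset.sum_nonneg fun i _ => hc i
    rw [hR' k]; linarith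
  have hRrec : ∀ k, R k = c (k + 1) + R (k + 1) := by
    intro k
    have hs : Summable fun n => c (k + 1 + n) := by
      have := (summable_nat_add_iff (k + 1)).2 hsum
      exact this.congr fun n => by rw [add_comm]
    rw [hR k, Summable.tsum_eq_zero_add hs, hR (k + 1)]
    congr 1
    exact tsum_congr fun n => congrArg c (by omega)
  have hRanti : ∀ k, R (k + 1) ≤ R k := fun k => by
    have := hRrec k; linarith [hc (k + 1)]
  have hRtend : Tendsto R atTop (nhds 0) := by
    have h2 : Tendsto (fun i => ∑' n, c (n + i)) atTop (nhds 0) :=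
      tendsto_sum_nat_add c
    have : Tendsto (fun k => ∑' n, c (n + (k + 1))) atTop (nhds 0) :=
      h2.comp (tendsto_add_atTop_nat 1)
    exact this.congr fun k => (hR' k).symm
  -- nonnegativity of terms
  set f : ℕ → ℝ := fun k => c k / (R k * Real.logb 2 (1 / R k)) with hf
  have hfnn : ∀ k, 0 ≤ f k := by
    intro k
    apply div_nonneg (hc k)
    apply mul_nonneg (hRpos k).le
    apply Real.logb_nonneg (by norm_num)
    rw [le_div_iff₀ (hRpos k), one_mul]
    exact (hRlt1 k).le
  -- choose K with R k ≤ exp (-1) for k ≥ K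
  obtain ⟨K, hK⟩ : ∃ K, ∀ k ≥ K, R k ≤ Real.exp (-1) := by
    have := hRtend.eventually (eventually_le_nhds (Real.exp_pos (-1)))
    exact eventually_atTop.1 this
  -- the telescoping lower bound for individual terms
  set G : ℕ → ℝ := fun k => Real.log 2 * Real.log (-Real.log (R k)) with hG
  have hkey : ∀ k ≥ K, G (k + 1) - G k ≤ f (k + 1) := by
    intro k hk
    have ha : 0 < R (k + 1) := hRpos (k + 1)
    have hab : R (k + 1) ≤ R k := hRanti k
    have hb : R k ≤ Real.exp (-1) := hK k hk
    have hB := lemB ha hab hb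
    have hcval : c (k + 1) = R k - R (k + 1) := by linarith [hRrec k]
    have hloga : Real.log (R (k + 1)) < 0 :=
      Real.log_neg ha (lt_of_lt_of_le (lt_of_le_of_lt hab (lt_of_le_of_lt hb (by
        rw [Real.exp_lt_one_iff]; norm_num))) le_rfl)
    have hlog2 : (0:ℝ) < Real.log 2 := Real.log_pos (by norm_num)
    have hfval : f (k + 1) = Real.log 2 * ((R k - R (k + 1)) / (R (k + 1) * -Real.log (R (k + 1)))) := by
      rw [hf]
      simp only
      rw [hcval, Real.logb, Real.log_div one_ne_zero ha.ne', Real.log_one]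
      have h1 : R (k+1) ≠ 0 := ha.ne'
      have h2 : Real.log (R (k+1)) ≠ 0 := hloga.ne
      have h3 : Real.log 2 ≠ 0 := hlog2.ne'
      field_simp
      ring
    have hGval : G (k + 1) - G k
        = Real.log 2 * (Real.log (-Real.log (R (k+1))) - Real.log (-Real.log (R k))) := by
      rw [hG]; ring
    rw [hfval, hGval]
    exact mul_le_mul_of_nonneg_left hB hlog2.le
  -- partial sums are monotone
  have hSmono : Monotone (fun N => ∑ k ∈ Finset.range N, f k) :=
    monotone_nat_of_le_succ fun N => by
      rw [Finset.sum_range_succ]; linarith [hfnn N]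
  -- telescoping lower bound
  have hind : ∀ m : ℕ, G (K + m) - G K ≤ ∑ k ∈ Finset.range (K + m + 1), f k := by
    intro m
    induction m with
    | zero => simpa using Finset.sum_nonneg fun i (_ : i ∈ Finset.range (K + 0 + 1)) => hfnn i
    | succ m ih =>
      have h1 := hkey (K + m) (Nat.le_add_right K m)
      rw [show K + (m + 1) + 1 = (K + m + 1) + 1 by ring, Finset.sum_range_succ,
        show K + (m + 1) = (K + m) + 1 by ring]
      linarith
  -- G tends to atTop
  have hlog2 : (0:ℝ) < Real.log 2 := Real.log_pos (by norm_num)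
  have hGtend : Tendsto G atTop atTop := by
    have h0 : Tendsto R atTop (nhdsWithin 0 (Set.Ioi 0)) :=
      tendsto_nhdsWithin_of_tendsto_nhds_of_eventually_within R hRtend
        (Eventually.of_forall fun k => hRpos k)
    have h1 : Tendsto (fun k => -Real.log (R k)) atTop atTop := by
      have h2 : Tendsto (fun k => Real.log (R k)) atTop atBot :=
        Real.tendsto_log_nhdsGT_zero.comp h0
      exact tendsto_neg_atBot_atTop.comp h2
    have h3 : Tendsto (fun k => Real.log (-Real.log (R k))) atTop atTop :=
      Real.tendsto_log_atTop.comp h1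
    exact h3.const_mul_atTop hlog2
  rw [tendsto_atTop_atTop]
  intro b
  obtain ⟨M, hM1, hM2⟩ := ((hGtend.eventually_ge_atTop (b + G K)).and
    (eventually_ge_atTop K)).exists
  refine ⟨M + 1, fun N hN => ?_⟩
  have hMK : K + (M - K) = M := by omega
  have h4 := hind (M - K)
  rw [hMK] at h4
  have h5 := hSmono hN
  simp only at h5 ⊢
  linarith
end

section
/- Let (Ω, 𝓕, μ) be a probability space, let t : Ω → [0,∞] be a measurable function that is probability bounded with respect to μ, and let ε > 0 be a real number. Then ∫_{{ω : t(ω) ≥ 2}} t(ω) / (log t(ω))^{1+ε} dμ(ω) < ∞. -/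
open MeasureTheory Filter
open scoped ENNReal

/-- measure-theoretic core of Proposition 1. If `t : Ω → [0,∞]` is a
measurable function on a probability space that is probability bounded
(`μ {t > C} ≤ 1/C` for all `C > 0`), then for every `ε > 0` the integral of
`t / (log₂ t)^(1+ε)` over the set `{t ≥ 2}` is finite. -/
theorem stmt4 {Ω : Type*} [MeasurableSpace Ω] (μ : Measure Ω) [IsProbabilityMeasure μ]
    (t : Ω → ℝ≥0∞) (ht : Measurable t)
    (hpb : ∀ C : ℝ, 0 < C → μ {ω | ENNReal.ofReal C < t ω} ≤ ENNReal.ofReal (1 / C))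
    (ε : ℝ) (hε : 0 < ε) :
    ∫⁻ ω in {ω | 2 ≤ t ω},
        t ω / ENNReal.ofReal (Real.logb 2 (t ω).toReal ^ (1 + ε)) ∂μ < ⊤ := by
  set f : Ω → ℝ≥0∞ := fun ω => t ω / ENNReal.ofReal (Real.logb 2 (t ω).toReal ^ (1 + ε)) with hf
  set A : ℕ → Set Ω := fun k => {ω | 2 ^ (k + 1) ≤ t ω ∧ t ω < 2 ^ (k + 2)} with hA
  -- the infinite part has measure zero
  have hinf : μ {ω | t ω = ⊤} = 0 := by
    have hle : ∀ n : ℕ, 1 ≤ n → μ {ω | t ω = ⊤} ≤ ENNReal.ofReal (1 / n) := by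
      intro n hn
      refine le_trans (measure_mono ?_) (hpb n (by positivity))
      intro ω hω
      simp only [Set.mem_setOf_eq] at hω ⊢
      simp [hω]
    have htend : Tendsto (fun n : ℕ => ENNReal.ofReal (1 / n)) atTop (nhds 0) := by
      rw [show (0 : ℝ≥0∞) = ENNReal.ofReal 0 by simp]
      exact ENNReal.tendsto_ofReal tendsto_one_div_atTop_nhds_zero_nat
    refine le_antisymm (ge_of_tendsto htend ?_) zero_le
    filter_upwards [eventually_ge_atTop 1] with n hn using hle n hn
  -- inclusion in the annuli
  have hsub : {ω | 2 ≤ t ω} ⊆ {ω | t ω = ⊤} ∪ ⋃ k, A k := by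
    intro ω hω
    simp only [Set.mem_setOf_eq] at hω
    by_cases hTop : t ω = ⊤
    · exact Or.inl hTop
    right
    have hlt : ∃ m : ℕ, t ω < 2 ^ m := by
      obtain ⟨m, hm⟩ := pow_unbounded_of_one_lt (t ω).toReal (by norm_num : (1:ℝ) < 2)
      refine ⟨m, ?_⟩
      calc t ω = ENNReal.ofReal (t ω).toReal := (ENNReal.ofReal_toReal hTop).symm
        _ < ENNReal.ofReal (2 ^ m) := by exact_mod_cast ENNReal.ofReal_lt_ofReal_iff (by positivity) |>.2 hm
        _ = 2 ^ m := by rw [ENNReal.ofReal_pow (by norm_num)]; norm_num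
    classical
    set m := Nat.find hlt with hm
    have hm1 : t ω < 2 ^ m := Nat.find_spec hlt
    have hm2 : 2 ≤ m := by
      by_contra hc
      push_neg at hc
      interval_cases m
      · exact absurd (hω.trans_lt hm1) (by norm_num)
      · exact absurd (hω.trans_lt hm1) (by norm_num)
    refine Set.mem_iUnion.2 ⟨m - 2, ?_, ?_⟩
    · have := Nat.find_min hlt (m := m - 1) (by omega)
      push_neg at this
      have : 2 ^ (m - 1) ≤ t ω := this
      convert this using 2
      omega
    · have : m - 2 + 2 = m := by omega
      rw [this]; exact hm1
  have hAmeas : ∀ k, MeasurableSet (A k) := fun k => ht measurableSet_Ico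
  -- pointwise bound on each annulus
  have hpt : ∀ k, ∀ ω ∈ A k,
      f ω ≤ 2 ^ (k + 2) / ENNReal.ofReal (((k : ℝ) + 1) ^ (1 + ε)) := by
    intro k ω hω
    obtain ⟨h1, h2⟩ := hω
    have htR : (2 : ℝ) ^ (k + 1) ≤ (t ω).toReal := by
      have := ENNReal.toReal_mono (h2.trans_le le_top).ne h1
      simpa using this
    have hlogb : (k : ℝ) + 1 ≤ Real.logb 2 (t ω).toReal := by
      have h2k : Real.logb 2 ((2 : ℝ) ^ (k + 1)) = (k : ℝ) + 1 := by
        rw [Real.logb_pow]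
        simp
      rw [← h2k]
      exact Real.logb_le_logb_of_le (by norm_num) (by positivity) htR
    have hden : ENNReal.ofReal (((k : ℝ) + 1) ^ (1 + ε))
        ≤ ENNReal.ofReal (Real.logb 2 (t ω).toReal ^ (1 + ε)) :=
      ENNReal.ofReal_le_ofReal (Real.rpow_le_rpow (by positivity) hlogb (by positivity))
    exact ENNReal.div_le_div h2.le hden
  -- measure bound on each annulus
  have hμA : ∀ k, μ (A k) ≤ ENNReal.ofReal (1 / 2 ^ k) := by
    intro k
    refine le_trans (measure_mono ?_) (hpb (2 ^ k) (by positivity))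
    intro ω hω
    obtain ⟨h1, _⟩ := hω
    have : ENNReal.ofReal ((2 : ℝ) ^ k) = (2 : ℝ≥0∞) ^ k := by
      rw [ENNReal.ofReal_pow (by norm_num)]; norm_num
    simp only [Set.mem_setOf_eq, this]
    calc (2 : ℝ≥0∞) ^ k < 2 ^ (k + 1) := by
          have hlt : ((2 ^ k : NNReal) : ℝ≥0∞) < ((2 ^ (k + 1) : NNReal) : ℝ≥0∞) :=
            ENNReal.coe_lt_coe.2
              (pow_lt_pow_right₀ (by norm_num : (1 : NNReal) < 2) (Nat.lt_succ_self k))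
          simpa using hlt
      _ ≤ t ω := h1
  -- integral bound on each annulus
  have hbound : ∀ k, ∫⁻ ω in A k, f ω ∂μ ≤ ENNReal.ofReal (4 / ((k : ℝ) + 1) ^ (1 + ε)) := by
    intro k
    have hc : ∫⁻ ω in A k, f ω ∂μ
        ≤ 2 ^ (k + 2) / ENNReal.ofReal (((k : ℝ) + 1) ^ (1 + ε)) * μ (A k) := by
      rw [← setLIntegral_const (A k)]
      exact setLIntegral_mono' (hAmeas k) (hpt k)
    refine hc.trans ?_
    have := mul_le_mul_right (hμA k) (2 ^ (k + 2) / ENNReal.ofReal (((k : ℝ) + 1) ^ (1 + ε)))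
    refine this.trans_eq ?_
    have h2 : (2 : ℝ≥0∞) ^ (k + 2) = ENNReal.ofReal ((2 : ℝ) ^ (k + 2)) := by
      rw [ENNReal.ofReal_pow (by norm_num)]; norm_num
    rw [h2, div_eq_mul_inv, mul_right_comm, ← ENNReal.ofReal_mul (by positivity),
      ← div_eq_mul_inv, ← ENNReal.ofReal_div_of_pos (by positivity)]
    congr 1
    field_simp
    ring
  -- summability
  have hsum : Summable (fun k : ℕ => 4 / ((k : ℝ) + 1) ^ (1 + ε)) := by
    have h0 : Summable (fun n : ℕ => 1 / (n : ℝ) ^ (1 + ε)) :=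
      Real.summable_one_div_nat_rpow.2 (by linarith)
    have h1 : Summable (fun k : ℕ => 1 / ((k : ℝ) + 1) ^ (1 + ε)) := by
      have := h0.comp_injective (add_left_injective 1)
      refine this.congr fun k => ?_
      simp [Function.comp]
    simpa [div_eq_mul_inv, mul_comm] using h1.mul_left 4
  calc ∫⁻ ω in {ω | 2 ≤ t ω}, f ω ∂μ
      ≤ ∫⁻ ω in {ω | t ω = ⊤} ∪ ⋃ k, A k, f ω ∂μ := lintegral_mono_set hsub
    _ ≤ (∫⁻ ω in {ω | t ω = ⊤}, f ω ∂μ) + ∫⁻ ω in ⋃ k, A k, f ω ∂μ :=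
        lintegral_union_le _ _ _
    _ = ∫⁻ ω in ⋃ k, A k, f ω ∂μ := by
        rw [setLIntegral_measure_zero _ _ hinf, zero_add]
    _ ≤ ∑' k, ∫⁻ ω in A k, f ω ∂μ := lintegral_iUnion_le _ _
    _ ≤ ∑' k : ℕ, ENNReal.ofReal (4 / ((k : ℝ) + 1) ^ (1 + ε)) := ENNReal.tsum_le_tsum hbound
    _ = ENNReal.ofReal (∑' k : ℕ, 4 / ((k : ℝ) + 1) ^ (1 + ε)) := by
        rw [ENNReal.ofReal_tsum_of_nonneg (fun k => by positivity) hsum]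
    _ < ⊤ := ENNReal.ofReal_lt_top
end

section
/- Let μ be a Borel probability measure on the Cantor space Ω, let a be a semimeasure bound, and let C > 0 be a real number. Then μ({ω ∈ Ω : there exists n ∈ ℕ with a(ω|n) > C · μ([ω|n])}) ≤ 1/C. -/
open MeasureTheory Filter
open scoped ENNReal

/-- The cylinder `[x]` of a finite binary string `x` in the Cantor space `ℕ → Bool`:
the set of infinite sequences extending `x`. -/
def cyl (x : List Bool) : Set (ℕ → Bool) :=
  {ω | ∀ i : ℕ, (h : i < x.length) → ω i = x.get ⟨i, h⟩}

/-- `seg ω n` is the string formed by the first `n` bits of `ω`. -/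
def seg (ω : ℕ → Bool) (n : ℕ) : List Bool :=
  List.ofFn (fun i : Fin n => ω i)

/-- A set of strings is prefix-free if no element is a proper prefix of another. -/
def PrefixFree (S : Set (List Bool)) : Prop :=
  ∀ x ∈ S, ∀ y ∈ S, x <+: y → x = y

/-- A nonnegative function on strings is a semimeasure bound if its sum over
every prefix-free set of strings is at most `1`. -/
def IsSemimeasureBound (a : List Bool → ℝ) : Prop :=
  (∀ x, 0 ≤ a x) ∧
  ∀ S : Set (List Bool), PrefixFree S → ∑' x : S, ENNReal.ofReal (a x.1) ≤ 1

lemma seg_length (ω : ℕ → Bool) (n : ℕ) : (seg ω n).length = n := by simp [seg]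

lemma mem_cyl_seg (ω : ℕ → Bool) (n : ℕ) : ω ∈ cyl (seg ω n) := by
  intro i h
  simp [seg]

lemma prefix_seg {y : List Bool} {ω : ℕ → Bool} {n : ℕ} (h : y <+: seg ω n) :
    y = seg ω y.length := by
  have hlen : y.length ≤ n := by simpa [seg] using h.length_le
  apply List.ext_get
  · simp [seg]
  intro i h1 h2
  have h3 : y[i] = (seg ω n)[i]'(lt_of_lt_of_le h1 (by simpa [seg] using hlen)) :=
    h.getElem h1
  simp only [List.get_eq_getElem, h3]
  simp [seg]

/-- core of Proposition 3: `d^A ≤⁺ d^P`. For a Borel probability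
measure `μ` on the Cantor space, a semimeasure bound `a`, and `C > 0`, the set of `ω`
having some prefix `ω|n` with `a(ω|n) > C · μ([ω|n])` has measure at most `1/C`. -/
theorem stmt5 (μ : Measure (ℕ → Bool)) [IsProbabilityMeasure μ]
    (a : List Bool → ℝ) (ha : IsSemimeasureBound a) (C : ℝ) (hC : 0 < C) :
    μ {ω | ∃ n : ℕ, ENNReal.ofReal C * μ (cyl (seg ω n)) < ENNReal.ofReal (a (seg ω n))} ≤
      ENNReal.ofReal (1 / C) := by
  set Bad : List Bool → Prop :=
    fun x => ENNReal.ofReal C * μ (cyl x) < ENNReal.ofReal (a x) with hBad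
  set B : Set (List Bool) := {x | Bad x ∧ ∀ m < x.length, ¬ Bad (x.take m)} with hB
  -- B is prefix-free
  have hpf : PrefixFree B := by
    intro x hx y hy hxy
    by_contra hne
    have hlt : x.length < y.length := by
      rcases lt_or_eq_of_le hxy.length_le with h | h
      · exact h
      · exact absurd (List.IsPrefix.eq_of_length hxy h) hne
    have hx' : x = y.take x.length := List.prefix_iff_eq_take.mp hxy
    exact hy.2 x.length hlt (hx' ▸ hx.1)
  -- covering
  have hcover : {ω | ∃ n : ℕ, ENNReal.ofReal C * μ (cyl (seg ω n)) < ENNReal.ofReal (a (seg ω n))}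
      ⊆ ⋃ x : B, cyl x.1 := by
    intro ω hω
    obtain ⟨n, hn⟩ := hω
    have hex : ∃ n, Bad (seg ω n) := ⟨n, hn⟩
    classical
    let N := Nat.find hex
    refine Set.mem_iUnion.2 ⟨⟨seg ω N, ?_, ?_⟩, mem_cyl_seg ω N⟩
    · exact Nat.find_spec hex
    · intro m hm hbadm
      rw [seg_length] at hm
      have htake : (seg ω N).take m = seg ω m := by
        have h1 : (seg ω N).take m <+: seg ω N := List.take_prefix _ _
        have := prefix_seg h1
        rwa [List.length_take, seg_length, min_eq_left hm.le] at this
      rw [htake] at hbadm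
      exact Nat.find_min hex hm hbadm
  calc μ _ ≤ μ (⋃ x : B, cyl x.1) := measure_mono hcover
    _ ≤ ∑' x : B, μ (cyl x.1) := measure_iUnion_le _
    _ ≤ ∑' x : B, ENNReal.ofReal (a x.1) / ENNReal.ofReal C := by
        refine ENNReal.tsum_le_tsum fun x => ?_
        rw [ENNReal.le_div_iff_mul_le (Or.inl (by simp [hC, ENNReal.ofReal_pos.2 hC, ne_of_gt]))
          (Or.inl ENNReal.ofReal_ne_top)]
        rw [mul_comm]
        exact le_of_lt x.2.1
    _ = (∑' x : B, ENNReal.ofReal (a x.1)) / ENNReal.ofReal C := by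
        simp [div_eq_mul_inv, ENNReal.tsum_mul_right]
    _ ≤ 1 / ENNReal.ofReal C := by
        gcongr
        exact ha.2 B hpf
    _ = ENNReal.ofReal (1 / C) := by
        rw [one_div, one_div, ENNReal.ofReal_inv_of_pos hC]
end

section
/- Let μ be a Borel probability measure on the Cantor space Ω and let M be a function from finite binary strings to [0,∞) satisfying the supermartingale inequality μ([x]) · M(x) ≥ μ([x0]) · M(x0) + μ([x1]) · M(x1) for every string x, where xb denotes x with the bit b appended. Then ∫_Ω liminf_{n→∞} M(ω|n) dμ(ω) ≤ M(Λ), where Λ denotes the empty string. -/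
open MeasureTheory Filter
open scoped ENNReal

lemma cyl_measurable (x : List Bool) : MeasurableSet (cyl x) := by
  have : cyl x = ⋂ i : Fin x.length, {ω : ℕ → Bool | ω i = x.get i} := by
    ext ω
    simp only [cyl, Set.mem_setOf_eq, Set.mem_iInter]
    exact ⟨fun h i => h i i.isLt, fun h i hi => h ⟨i, hi⟩⟩
  rw [this]
  refine MeasurableSet.iInter fun i => ?_
  have : {ω : ℕ → Bool | ω i = x.get i} = (fun ω : ℕ → Bool => ω (i : ℕ)) ⁻¹' {x.get i} := rfl
  rw [this]
  exact measurableSet_preimage (measurable_pi_apply _) (measurableSet_singleton _)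

lemma ofFn_snoc {n : ℕ} (f : Fin n → Bool) (b : Bool) :
    List.ofFn (Fin.snoc f b) = List.ofFn f ++ [b] := by
  rw [List.ofFn_succ']
  simp [Fin.snoc_castSucc, Fin.snoc_last, List.concat_eq_append]

lemma pointwise (M : List Bool → ℝ) (ω : ℕ → Bool) (n : ℕ) :
    ENNReal.ofReal (M (seg ω n)) =
      ∑ f : Fin n → Bool,
        (cyl (List.ofFn f)).indicator (fun _ => ENNReal.ofReal (M (List.ofFn f))) ω := by
  classical
  have key : ∀ f : Fin n → Bool, ω ∈ cyl (List.ofFn f) ↔ f = fun i : Fin n => ω ↑i := by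
    intro f
    constructor
    · intro h
      funext i
      have := h i (by simpa using i.isLt)
      simp only [List.get_ofFn] at this
      rw [this]
      congr 1
    · rintro rfl
      intro i hi
      simp [List.get_ofFn]
  rw [Finset.sum_eq_single (fun i : Fin n => ω i)]
  · rw [Set.indicator_of_mem ((key _).mpr rfl)]
    rfl
  · intro f _ hne
    rw [Set.indicator_of_notMem (fun h => hne ((key f).mp h))]
  · intro h
    exact absurd (Finset.mem_univ _) h

/-- Fatou-type bound, core of the Corollary to Proposition 4.
If `M ≥ 0` on strings satisfies the supermartingale inequality
`μ([x0])·M(x0) + μ([x1])·M(x1) ≤ μ([x])·M(x)`, then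
`∫ liminf_n M(ω|n) dμ(ω) ≤ M(Λ)`. -/
theorem stmt7 (μ : Measure (ℕ → Bool)) [IsProbabilityMeasure μ]
    (M : List Bool → ℝ) (hM : ∀ x, 0 ≤ M x)
    (hsm : ∀ x : List Bool,
      μ (cyl (x ++ [false])) * ENNReal.ofReal (M (x ++ [false])) +
        μ (cyl (x ++ [true])) * ENNReal.ofReal (M (x ++ [true])) ≤
          μ (cyl x) * ENNReal.ofReal (M x)) :
    ∫⁻ ω, Filter.liminf (fun n : ℕ => ENNReal.ofReal (M (seg ω n))) atTop ∂μ ≤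
      ENNReal.ofReal (M []) := by
  classical
  -- the sum bound
  have hsum : ∀ n : ℕ,
      ∑ f : Fin n → Bool, μ (cyl (List.ofFn f)) * ENNReal.ofReal (M (List.ofFn f)) ≤
        ENNReal.ofReal (M []) := by
    intro n
    induction n with
    | zero =>
        simp only [Finset.univ_unique, Finset.sum_singleton]
        have hc : cyl (List.ofFn (default : Fin 0 → Bool)) = Set.univ := by
          ext ω; simp [cyl]
        rw [List.ofFn_zero] at hc ⊢
        rw [hc, measure_univ, one_mul]
    | succ n ih =>
        refine le_trans ?_ ih
        rw [← Equiv.sum_comp (Fin.snocEquiv (fun _ => Bool))]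
        rw [Fintype.sum_prod_type_right]
        refine Finset.sum_le_sum fun f _ => ?_
        rw [Fintype.sum_bool]
        have he : ∀ (b : Bool) (g : Fin n → Bool),
            (Fin.snocEquiv (fun _ => Bool)) (b, g) = Fin.snoc g b := fun _ _ => rfl
        simp only [he]
        rw [ofFn_snoc, ofFn_snoc]
        have := hsm (List.ofFn f)
        rw [add_comm]; exact this
  have hint : ∀ n : ℕ, ∫⁻ ω, ENNReal.ofReal (M (seg ω n)) ∂μ =
      ∑ f : Fin n → Bool, μ (cyl (List.ofFn f)) * ENNReal.ofReal (M (List.ofFn f)) := by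
    intro n
    have hrw : (fun ω => ENNReal.ofReal (M (seg ω n))) = fun ω =>
        ∑ f : Fin n → Bool,
          (cyl (List.ofFn f)).indicator (fun _ => ENNReal.ofReal (M (List.ofFn f))) ω :=
      funext fun ω => pointwise M ω n
    rw [hrw, lintegral_finset_sum _
      (fun f _ => measurable_const.indicator (cyl_measurable _))]
    refine Finset.sum_congr rfl fun f _ => ?_
    rw [lintegral_indicator_const (cyl_measurable _), mul_comm]
  have hmeas : ∀ n : ℕ, Measurable fun ω : ℕ → Bool => ENNReal.ofReal (M (seg ω n)) := by
    intro n
    have hrw : (fun ω : ℕ → Bool => ENNReal.ofReal (M (seg ω n))) = fun ω =>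
        ∑ f : Fin n → Bool,
          (cyl (List.ofFn f)).indicator (fun _ => ENNReal.ofReal (M (List.ofFn f))) ω :=
      funext fun ω => pointwise M ω n
    rw [hrw]
    exact Finset.measurable_sum _ fun f _ => measurable_const.indicator (cyl_measurable _)
  calc ∫⁻ ω, Filter.liminf (fun n : ℕ => ENNReal.ofReal (M (seg ω n))) atTop ∂μ
      ≤ Filter.liminf (fun n : ℕ => ∫⁻ ω, ENNReal.ofReal (M (seg ω n)) ∂μ) atTop :=
        lintegral_liminf_le hmeas
    _ ≤ ENNReal.ofReal (M []) := by
        refine liminf_le_of_frequently_le (Frequently.of_forall fun n => ?_)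
        rw [hint n]
        exact hsum n
end

section
/- Let μ be a Borel probability measure on the Cantor space Ω and let (D_k)_{k≥1} be pairwise disjoint measurable subsets of Ω such that μ(D_k) > 0 for all k, the sequence (μ(D_k))_{k≥1} is strictly decreasing, and ∑_{i=j+1}^∞ μ(D_i) ≤ μ(D_j) for every j ≥ 1. Then the function g = ∑_{k=1}^∞ (1/(2·μ(D_k))) · 𝟙_{D_k} is probability bounded with respect to μ. -/
open MeasureTheory Filter
open scoped ENNReal

/-- probability boundedness of the test `g` in Theorem 2. If `(D k)`
are pairwise disjoint measurable sets of positive measure, with `μ (D k)` strictly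
decreasing and every tail sum `∑_{i > j} μ (D i)` at most `μ (D j)`, then the function
`g = ∑ k, (1 / (2 μ (D k))) · 𝟙_{D k}` is probability bounded:
`μ {g > C} ≤ 1/C` for every real `C > 0`. -/
theorem stmt12 (μ : Measure (ℕ → Bool)) [IsProbabilityMeasure μ]
    (D : ℕ → Set (ℕ → Bool)) (hmeas : ∀ k, MeasurableSet (D k))
    (hdisj : Pairwise (Function.onFun Disjoint D))
    (hpos : ∀ k, 0 < μ (D k))
    (hanti : StrictAnti (fun k => μ (D k)))
    (htail : ∀ j : ℕ, ∑' i : ℕ, μ (D (j + 1 + i)) ≤ μ (D j)) :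
    ∀ C : ℝ, 0 < C →
      μ {ω | ENNReal.ofReal C <
          ∑' k : ℕ, (D k).indicator (fun _ => (2 * μ (D k))⁻¹) ω} ≤
        ENNReal.ofReal (1 / C) := by
  intro C hC
  set c := ENNReal.ofReal C with hc
  have hg : ∀ ω k, ω ∈ D k →
      (∑' k : ℕ, (D k).indicator (fun _ => (2 * μ (D k))⁻¹) ω) = (2 * μ (D k))⁻¹ := by
    intro ω k hωk
    rw [tsum_eq_single k]
    · simp [Set.indicator_of_mem hωk]
    · intro j hjk
      have hω : ω ∉ D j := fun h => (hdisj hjk).le_bot ⟨h, hωk⟩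
      simp [Set.indicator_of_notMem hω]
  have hg0 : ∀ ω, (∀ k, ω ∉ D k) →
      (∑' k : ℕ, (D k).indicator (fun _ => (2 * μ (D k))⁻¹) ω) = 0 := by
    intro ω hω
    simp [Set.indicator_of_notMem, hω]
  have hcinv : c⁻¹ = ENNReal.ofReal (1 / C) := by
    rw [one_div, ENNReal.ofReal_inv_of_pos hC]
  by_cases hS : ∃ k, c < (2 * μ (D k))⁻¹
  · obtain ⟨j, hjS, hjmin⟩ : ∃ j, c < (2 * μ (D j))⁻¹ ∧
        ∀ k < j, ¬ c < (2 * μ (D k))⁻¹ :=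
      ⟨Nat.find hS, Nat.find_spec hS, fun k hk => Nat.find_min hS hk⟩
    have hsub : {ω | c < ∑' k : ℕ, (D k).indicator (fun _ => (2 * μ (D k))⁻¹) ω}
        ⊆ ⋃ i, D (j + i) := by
      intro ω hω
      simp only [Set.mem_setOf_eq] at hω
      by_cases hmem : ∃ k, ω ∈ D k
      · obtain ⟨k, hk⟩ := hmem
        rw [hg ω k hk] at hω
        have hkj : j ≤ k := by
          by_contra hlt
          push_neg at hlt
          exact hjmin k hlt hω
        exact Set.mem_iUnion.2 ⟨k - j, by rwa [Nat.add_sub_cancel' hkj]⟩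
      · push_neg at hmem
        rw [hg0 ω hmem] at hω
        exact absurd hω (by simp)
    calc μ {ω | c < ∑' k : ℕ, (D k).indicator (fun _ => (2 * μ (D k))⁻¹) ω}
        ≤ μ (⋃ i, D (j + i)) := measure_mono hsub
      _ ≤ ∑' i, μ (D (j + i)) := measure_iUnion_le _
      _ = μ (D j) + ∑' i, μ (D (j + 1 + i)) := by
          rw [tsum_eq_zero_add' ENNReal.summable]
          simp only [Nat.add_zero]
          congr 1
          apply tsum_congr
          intro i
          have : j + (i + 1) = j + 1 + i := by omega
          rw [this]
      _ ≤ μ (D j) + μ (D j) := add_le_add_right (htail j) _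
      _ = 2 * μ (D j) := (two_mul _).symm
      _ ≤ c⁻¹ := (ENNReal.lt_inv_iff_lt_inv.1 hjS).le
      _ = ENNReal.ofReal (1 / C) := hcinv
  · push_neg at hS
    have hempty : {ω | c < ∑' k : ℕ, (D k).indicator (fun _ => (2 * μ (D k))⁻¹) ω} = ∅ := by
      ext ω
      simp only [Set.mem_setOf_eq, Set.mem_empty_iff_false, iff_false, not_lt]
      by_cases hmem : ∃ k, ω ∈ D k
      · obtain ⟨k, hk⟩ := hmem
        rw [hg ω k hk]
        exact hS k
      · push_neg at hmem
        rw [hg0 ω hmem]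
        exact zero_le
    rw [hempty]
    simp
end
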